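/- Let H be a subdirect product of H₁ × ⋯ × H_r with projections π_i : H → H_i, and let N be a soluble normal subgroup of H with H/N ≅ T^ℓ for a finite nonabelian simple group T and positive integer ℓ. Then there exist nonnegative integers ℓ₁, …, ℓ_r with ℓ₁ + ⋯ + ℓ_r ≥ ℓ such that H_i/(Nπ_i) ≅ T^{ℓ_i} for all 1 ≤ i ≤ r. -/

import Mathlib

/-!
For `T` nonabelian simple, every normal subgroup of `T^ℓ` is the subproduct over the
coordinates where it is nontrivial, since its commutators with `Pi.mulSingle j g` fill up the
`j`-th factor. Hence `ψ` maps `M_i = ker π_i` onto such a subproduct `K_i`, and with `C_i` the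
coordinates where `K_i` is trivial, `H_i/Nπ_i ≅ H/M_iN ≅ T^ℓ/K_i ≅ T^{C_i}`. Every coordinate `j`
lies in some `C_i`: otherwise the preimage `Q` of the `j`-th factor lies in `M_iN` for all `i`,
so `Q` embeds in `∏ᵢ π_i(Q) = ∏ᵢ π_i(N)` and is soluble, although it maps onto `T`.
-/

open Subgroup

instance Group.isSolvable_pi {ι : Type*} [Finite ι] {G : ι → Type*} [∀ i, Group (G i)]
    [∀ i, Group.IsSolvable (G i)] : Group.IsSolvable (∀ i, G i) := by
  choose n hn using fun i => (inferInstance : Group.IsSolvable (G i)).solvable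
  obtain ⟨m, hm⟩ := Finite.exists_le n
  refine ⟨m, eq_bot_iff.mpr fun x hx => mem_bot.mpr (funext fun i => ?_)⟩
  have hxi : x i ∈ derivedSeries (G i) m :=
    map_derivedSeries_le_derivedSeries (Pi.evalMonoidHom G i) m (mem_map_of_mem _ hx)
  simpa [hn i] using derivedSeries_antitone _ (hm i) hxi

theorem Group.isSolvable_of_le_ker_sup {G ι : Type*} [Group G] [Finite ι] {A : ι → Type*}
    [∀ i, Group (A i)] (f : ∀ i, G →* A i) (hf : ∀ g, (∀ i, f i g = 1) → g = 1)
    (S Q : Subgroup G) [Group.IsSolvable S] (hQ : ∀ i, Q ≤ (f i).ker ⊔ S) :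
    Group.IsSolvable Q := by
  have hmem (i : ι) (q : Q) : f i q ∈ S.map (f i) := by
    have := map_mono (f := f i) (hQ i) (mem_map_of_mem _ q.2)
    rwa [Subgroup.map_sup, map_ker_self, bot_sup_eq] at this
  have (i : ι) : Group.IsSolvable (S.map (f i)) :=
    Group.isSolvable_of_surjective ((f i).subgroupMap_surjective S)
  let F : Q →* ∀ i, S.map (f i) :=
    MonoidHom.pi fun i => ((f i).comp Q.subtype).codRestrict _ (hmem i)
  refine Group.isSolvable_of_isSolvable_injective (f := F) ((injective_iff_map_eq_one F).mpr ?_)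
  exact fun q hq => Subtype.ext (hf q fun i => congrArg Subtype.val (congrFun hq i))

theorem IsSimpleGroup.center_eq_bot {T : Type*} [Group T] [IsSimpleGroup T]
    (hT : ∃ a b : T, a * b ≠ b * a) : center T = ⊥ := by
  refine (center T).normal_of_characteristic.eq_bot_or_eq_top.resolve_right fun htop => ?_
  obtain ⟨a, b, hab⟩ := hT
  exact hab (mem_center_iff.mp (htop ▸ mem_top a) b).symm

section PowerOfSimple

variable {ι T : Type*} [Group T]

theorem Subgroup.Normal.mulSingle_mem [DecidableEq ι] [IsSimpleGroup T]
    {K : Subgroup (ι → T)} (hK : K.Normal) (hT : ∃ a b : T, a * b ≠ b * a) {k : ι → T} (hk : k ∈ K) {j : ι} (hkj : k j ≠ 1) (t : T) : Pi.mulSingle j t ∈ K := by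
  have hW : (K.comap (MonoidHom.mulSingle (fun _ : ι => T) j)).Normal := hK.comap _
  have hcomm (g : T) :
      g * k j * g⁻¹ * (k j)⁻¹ ∈ K.comap (MonoidHom.mulSingle (fun _ : ι => T) j) := by
    have hsingle : Pi.mulSingle j g * k * (Pi.mulSingle j g)⁻¹ * k⁻¹
        = Pi.mulSingle j (g * k j * g⁻¹ * (k j)⁻¹) := by
      funext j'
      rcases eq_or_ne j' j with rfl | hj <;> simp [*]
    rw [mem_comap, MonoidHom.mulSingle_apply, ← hsingle]
    exact K.mul_mem (hK.conj_mem k hk (Pi.mulSingle j g)) (K.inv_mem hk)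
  rcases hW.eq_bot_or_eq_top with hbot | htop
  · simp only [hbot, mem_bot, mul_inv_eq_iff_eq_mul, one_mul] at hcomm
    have hcenter : k j ∈ center T := mem_center_iff.mpr hcomm
    rw [IsSimpleGroup.center_eq_bot hT, mem_bot] at hcenter
    exact absurd hcenter hkj
  · exact eq_top_iff.mp htop (mem_top t)

theorem Subgroup.Normal.eq_pi_bot [Finite ι] [IsSimpleGroup T]
    (hT : ∃ a b : T, a * b ≠ b * a) {K : Subgroup (ι → T)} (hK : K.Normal) :
    K = Subgroup.pi {j | ∀ k ∈ K, k j = 1} fun _ => ⊥ := by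
  classical
  refine le_antisymm (fun k hk j hj => hj k hk) fun x hx => pi_mem_of_mulSingle_mem x fun j => ?_
  by_cases hj : ∀ k ∈ K, k j = 1
  · rw [mem_bot.mp (hx j hj), Pi.mulSingle_one]
    exact K.one_mem
  · push Not at hj
    obtain ⟨k, hk, hkj⟩ := hj
    exact hK.mulSingle_mem hT hk hkj _

theorem exists_surjective_ker_eq_pi_bot (C : Finset ι) :
    ∃ P : (ι → T) →* (Fin C.card → T), Function.Surjective P ∧
      P.ker = Subgroup.pi C fun _ => ⊥ := by
  classical
  let e : Fin C.card ≃ C := C.equivFin.symm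
  refine ⟨MonoidHom.pi fun n => Pi.evalMonoidHom _ (e n : ι), fun y => ?_, ?_⟩
  · refine ⟨fun j => if h : j ∈ C then y (e.symm ⟨j, h⟩) else 1, funext fun n => ?_⟩
    simp [e]
  · ext x
    simp only [MonoidHom.mem_ker, mem_pi, mem_bot, funext_iff, MonoidHom.pi_apply,
      Pi.evalMonoidHom_apply, Pi.one_apply, Finset.mem_coe]
    exact ⟨fun h j hj => by simpa [e] using h (e.symm ⟨j, hj⟩), fun h n => h _ (e n).2⟩

end PowerOfSimple

theorem MonoidHom.exists_lift_ker_eq_map {G A B : Type*} [Group G] [Group A] [Group B]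
    (π : G →* A) (hπ : Function.Surjective π) (g : G →* B) (hg : Function.Surjective g)
    (hle : π.ker ≤ g.ker) : ∃ φ : A →* B, Function.Surjective φ ∧ φ.ker = g.ker.map π := by
  let φ := π.liftOfSurjective hπ ⟨g, hle⟩
  have hφ : φ.comp π = g := π.liftOfRightInverse_comp _ _ ⟨g, hle⟩
  refine ⟨φ, .of_comp (hφ ▸ hg), ?_⟩
  rw [← hφ, ← comap_ker, map_comap_eq_self_of_surjective hπ]

theorem exists_forall_mem_map_ker_apply_eq_one {G ι κ T : Type*} [Group G] [Group T]
    [IsSimpleGroup T] (hT : ∃ a b : T, a * b ≠ b * a) [Finite ι] {A : ι → Type*}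
    [∀ i, Group (A i)] (f : ∀ i, G →* A i) (hf : ∀ g, (∀ i, f i g = 1) → g = 1)
    (ψ : G →* (κ → T)) (hψ : Function.Surjective ψ) [Group.IsSolvable ψ.ker] (j : κ) :
    ∃ i, ∀ k ∈ (f i).ker.map ψ, k j = 1 := by
  classical
  by_contra! h
  choose k hk hkj using h
  let Q := (MonoidHom.mulSingle (fun _ : κ => T) j).range.comap ψ
  have hQ (i : ι) : Q ≤ (f i).ker ⊔ ψ.ker := by
    rintro q ⟨t, ht⟩
    rw [← comap_map_eq, mem_comap, ← ht]
    exact (((f i).normal_ker).map ψ hψ).mulSingle_mem hT (hk i) (hkj i) t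
  have := Group.isSolvable_of_le_ker_sup f hf ψ.ker Q hQ
  have hQT : Function.Surjective ((Pi.evalMonoidHom _ j).comp (ψ.comp Q.subtype)) := fun t => by
    obtain ⟨g, hg⟩ := hψ (Pi.mulSingle j t)
    exact ⟨⟨g, t, hg.symm⟩, by simp [hg]⟩
  obtain ⟨a, b, hab⟩ := hT
  exact hab (IsSimpleGroup.comm_iff_isSolvable.mpr (Group.isSolvable_of_surjective hQT) a b)

theorem stmt_5_general {r : ℕ} {Hs : Fin r → Type*} [∀ i, Group (Hs i)]
    {T : Type*} [Group T]
    (hT : IsSimpleGroup T) (hTna : ∃ a b : T, a * b ≠ b * a)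
    (H : Subgroup (∀ i, Hs i))
    (π : ∀ i, ↥H →* Hs i)
    (hπ : ∀ i, π i = (Pi.evalMonoidHom Hs i).comp H.subtype)
    (hs : ∀ i, Function.Surjective (π i))
    (N : Subgroup ↥H) (hsol : IsSolvable N)
    (ℓ : ℕ)
    (ψ : ↥H →* (Fin ℓ → T)) (hψ : Function.Surjective ψ) (hkerψ : ψ.ker = N) :
    ∃ ℓs : Fin r → ℕ, ℓ ≤ ∑ i, ℓs i ∧
      ∀ i, ∃ φ : Hs i →* (Fin (ℓs i) → T),
        Function.Surjective φ ∧ φ.ker = Subgroup.map (π i) N := by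
  classical
  have hπ_inj (h : H) (h1 : ∀ i, π i h = 1) : h = 1 :=
    Subtype.ext (funext fun i => by simpa [hπ] using h1 i)
  subst hkerψ
  have : Group.IsSolvable ψ.ker := hsol
  let C (i : Fin r) : Finset (Fin ℓ) := {j | ∀ k ∈ (π i).ker.map ψ, k j = 1}
  refine ⟨fun i => (C i).card, ?_, fun i => ?_⟩
  · have hcover : (Finset.univ : Finset (Fin ℓ)) ⊆ Finset.univ.biUnion C := fun j _ => by
      simpa [C] using exists_forall_mem_map_ker_apply_eq_one hTna π hπ_inj ψ hψ j
    simpa using (Finset.card_le_card hcover).trans Finset.card_biUnion_le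
  · obtain ⟨P, hP, hPker⟩ := exists_surjective_ker_eq_pi_bot (T := T) (C i)
    have hker : (P.comp ψ).ker = (π i).ker ⊔ ψ.ker := by
      rw [← MonoidHom.comap_ker, hPker, Finset.coe_filter_univ,
        ← (((π i).normal_ker).map ψ hψ).eq_pi_bot hTna, comap_map_eq]
    obtain ⟨φ, hφ, hφker⟩ := (π i).exists_lift_ker_eq_map (hs i) (P.comp ψ) (hP.comp hψ)
      (hker ▸ le_sup_left)
    exact ⟨φ, hφ, by rw [hφker, hker, Subgroup.map_sup, map_ker_self, bot_sup_eq]⟩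

/-- Let `H ≤ H₁ × ⋯ × H_r` be a subdirect product with projections
`π_i`, and `N` a soluble normal subgroup of `H` with `H/N ≅ T^ℓ` for a finite nonabelian
simple group `T` and `ℓ ≥ 1`. Then there are nonnegative integers `ℓ₁, …, ℓ_r` with
`ℓ₁ + ⋯ + ℓ_r ≥ ℓ` such that `H_i/(Nπ_i) ≅ T^{ℓ_i}` for all `i` (expressed via
surjective homomorphisms `H_i → T^{ℓ_i}` with kernel exactly `Nπ_i`). -/
theorem stmt_5 {r : ℕ} {Hs : Fin r → Type*} [∀ i, Group (Hs i)] [∀ i, Finite (Hs i)]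
    {T : Type*} [Group T] [Finite T]
    (hT : IsSimpleGroup T) (hTna : ∃ a b : T, a * b ≠ b * a)
    (H : Subgroup (∀ i, Hs i))
    (π : ∀ i, ↥H →* Hs i)
    (hπ : ∀ i, π i = (Pi.evalMonoidHom Hs i).comp H.subtype)
    (hs : ∀ i, Function.Surjective (π i))
    (N : Subgroup ↥H) (hN : N.Normal) (hsol : IsSolvable N)
    (ℓ : ℕ) (hℓ : 1 ≤ ℓ)
    (ψ : ↥H →* (Fin ℓ → T)) (hψ : Function.Surjective ψ) (hkerψ : ψ.ker = N) :
    ∃ ℓs : Fin r → ℕ, ℓ ≤ ∑ i, ℓs i ∧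
      ∀ i, ∃ φ : Hs i →* (Fin (ℓs i) → T),
        Function.Surjective φ ∧ φ.ker = Subgroup.map (π i) N :=
  stmt_5_general hT hTna H π hπ hs N hsol ℓ ψ hψ hkerψ
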